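/- arXiv:quant-ph/0206185 — 7 statements merged into one kernel-verified Lean document; each statement's English description precedes it below -/
import Mathlib

section
/- Quantum Neyman–Pearson inequality: let ρ be a density operator and σ a positive semidefinite operator on a finite-dimensional Hilbert space, let a be real, and let S = {ρ − e^{a}σ > 0} be the spectral projection onto the positive part of ρ − e^{a}σ. Then for every test T with 0 ≤ T ≤ I, α(S) + e^{a} β(S) ≤ α(T) + e^{a} β(T), where α(X) = 1 − Tr(ρ X) and β(X) = Tr(σ X). -/
/-!
Write `A = ρ - e^a σ`. Both sides of the inequality are `1 - Re Tr(A X)` evaluated at `X = S`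
and at `X = T`, so it suffices that `S` maximises `X ↦ Re Tr(A X)` over tests. In an eigenbasis
of `A` this is the scalar statement `λ t ≤ max λ 0` for every eigenvalue `λ` of `A` and every
diagonal entry `t ∈ [0, 1]` of the conjugated test.
-/

open scoped ComplexOrder

/-- The spectral projection of a matrix onto the direct sum of its eigenspaces
corresponding to strictly positive eigenvalues (defined to be `0` if the matrix
is not Hermitian). -/
noncomputable def posProj {m : Type*} [Fintype m] [DecidableEq m]
    (A : Matrix m m ℂ) : Matrix m m ℂ :=
  if hA : A.IsHermitian then
    (hA.eigenvectorUnitary : Matrix m m ℂ) *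
      Matrix.diagonal (fun i => if 0 < hA.eigenvalues i then (1 : ℂ) else 0) *
      star (hA.eigenvectorUnitary : Matrix m m ℂ)
  else 0

namespace Matrix

variable {m : Type*}

lemma PosSemidef.re_apply_self_nonneg {M : Matrix m m ℂ} (hM : M.PosSemidef) (i : m) :
    0 ≤ (M i i).re :=
  (Complex.nonneg_iff.mp hM.diag_nonneg).1

lemma PosSemidef.re_apply_self_le_one [DecidableEq m] {M : Matrix m m ℂ}
    (hM : (1 - M).PosSemidef) (i : m) : (M i i).re ≤ 1 := by
  have h := hM.re_apply_self_nonneg i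
  simp only [sub_apply, one_apply_eq, Complex.sub_re, Complex.one_re] at h
  linarith

lemma re_trace_sub_ofReal_smul_mul [Fintype m] (ρ σ X : Matrix m m ℂ) (c : ℝ) :
    ((ρ - (c : ℂ) • σ) * X).trace.re = (ρ * X).trace.re - c * (σ * X).trace.re := by
  rw [sub_mul, trace_sub, smul_mul, trace_smul, smul_eq_mul, Complex.sub_re,
    Complex.re_ofReal_mul]

namespace IsHermitian

variable [Fintype m] [DecidableEq m] {A : Matrix m m ℂ}

lemma posProj_eq (hA : A.IsHermitian) :
    posProj A = (hA.eigenvectorUnitary : Matrix m m ℂ) *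
      diagonal (fun i => if 0 < hA.eigenvalues i then (1 : ℂ) else 0) *
      star (hA.eigenvectorUnitary : Matrix m m ℂ) := by
  rw [posProj, dif_pos hA]

lemma re_trace_mul_eq_sum (hA : A.IsHermitian) (X : Matrix m m ℂ) :
    (A * X).trace.re = ∑ i, hA.eigenvalues i *
      ((star (hA.eigenvectorUnitary : Matrix m m ℂ) * X * hA.eigenvectorUnitary) i i).re := by
  set U : Matrix m m ℂ := ↑hA.eigenvectorUnitary
  have h : (A * X).trace =
      (diagonal (RCLike.ofReal ∘ hA.eigenvalues) * (star U * X * U)).trace := by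
    conv_lhs => rw [hA.spectral_theorem, Unitary.conjStarAlgAut_apply]
    rw [mul_assoc, mul_assoc, trace_mul_comm, ← mul_assoc, ← mul_assoc, ← mul_assoc]
  rw [h]
  simp [trace, diagonal_mul]

lemma star_eigenvectorUnitary_mul_posProj_mul (hA : A.IsHermitian) :
    star (hA.eigenvectorUnitary : Matrix m m ℂ) * posProj A * hA.eigenvectorUnitary =
      diagonal (fun i => if 0 < hA.eigenvalues i then (1 : ℂ) else 0) := by
  have hU : star (hA.eigenvectorUnitary : Matrix m m ℂ) * hA.eigenvectorUnitary = 1 :=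
    Unitary.coe_star_mul_self _
  rw [hA.posProj_eq]
  simp only [← mul_assoc, hU, one_mul]
  rw [mul_assoc, hU, mul_one]

lemma re_trace_mul_le_re_trace_mul_posProj (hA : A.IsHermitian) {T : Matrix m m ℂ}
    (hT : T.PosSemidef) (hT' : (1 - T).PosSemidef) :
    (A * T).trace.re ≤ (A * posProj A).trace.re := by
  set U : Matrix m m ℂ := ↑hA.eigenvectorUnitary
  have hU : Uᴴ * U = 1 := Unitary.coe_star_mul_self _
  have hUT : (star U * T * U).PosSemidef := hT.conjTranspose_mul_mul_same U
  have hUT' : (1 - star U * T * U).PosSemidef := by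
    have h := hT'.conjTranspose_mul_mul_same U
    rwa [mul_sub, sub_mul, mul_one, hU] at h
  rw [hA.re_trace_mul_eq_sum, hA.re_trace_mul_eq_sum,
    hA.star_eigenvectorUnitary_mul_posProj_mul]
  refine Finset.sum_le_sum fun i _ => ?_
  by_cases hi : 0 < hA.eigenvalues i
  · simp only [diagonal_apply_eq, if_pos hi, Complex.one_re, mul_one]
    exact mul_le_of_le_one_right hi.le (hUT'.re_apply_self_le_one i)
  · simp only [diagonal_apply_eq, if_neg hi, Complex.zero_re, mul_zero]
    exact mul_nonpos_of_nonpos_of_nonneg (not_lt.mp hi) (hUT.re_apply_self_nonneg i)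

end IsHermitian

end Matrix

theorem quantum_neyman_pearson_general {m : Type*} [Fintype m] [DecidableEq m]
    (ρ σ : Matrix m m ℂ) (hρ : ρ.PosSemidef)
    (hσ : σ.PosSemidef) (a : ℝ)
    (T : Matrix m m ℂ) (hT : T.PosSemidef) (hT' : (1 - T).PosSemidef) :
    (1 - (ρ * posProj (ρ - (Real.exp a : ℂ) • σ)).trace.re) +
        Real.exp a * (σ * posProj (ρ - (Real.exp a : ℂ) • σ)).trace.re ≤
      (1 - (ρ * T).trace.re) + Real.exp a * (σ * T).trace.re := by
  have hA : (ρ - (Real.exp a : ℂ) • σ).IsHermitian :=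
    hρ.1.sub (hσ.1.smul (isSelfAdjoint_iff.mpr (Complex.conj_ofReal _)))
  have h := hA.re_trace_mul_le_re_trace_mul_posProj hT hT'
  rw [Matrix.re_trace_sub_ofReal_smul_mul, Matrix.re_trace_sub_ofReal_smul_mul] at h
  linarith

/-- Quantum Neyman–Pearson inequality for the likelihood test `S = {ρ − e^a σ > 0}`. -/
theorem quantum_neyman_pearson {m : Type*} [Fintype m] [DecidableEq m]
    (ρ σ : Matrix m m ℂ) (hρ : ρ.PosSemidef) (hρ1 : ρ.trace = 1)
    (hσ : σ.PosSemidef) (a : ℝ)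
    (T : Matrix m m ℂ) (hT : T.PosSemidef) (hT' : (1 - T).PosSemidef) :
    (1 - (ρ * posProj (ρ - (Real.exp a : ℂ) • σ)).trace.re) +
        Real.exp a * (σ * posProj (ρ - (Real.exp a : ℂ) • σ)).trace.re ≤
      (1 - (ρ * T).trace.re) + Real.exp a * (σ * T).trace.re :=
  quantum_neyman_pearson_general ρ σ hρ hσ a T hT hT'
end

section
/- With ρ a density operator, σ positive semidefinite, and S(a) = {ρ − e^{a}σ > 0} the spectral projection onto the positive part of ρ − e^{a}σ, the inequality α(a) + e^{a} β(a) ≤ 1 holds, where α(a) = 1 − Tr(ρ S(a)) and β(a) = Tr(σ S(a)). In particular β(a) ≤ e^{−a}. -/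
/-!
`S(a)` is the functional calculus `χ(A)` of `A = ρ - e^a σ` with the indicator `χ` of `(0, ∞)`.
Since `0 ≤ χ ≤ 1` and `x χ(x) ≥ 0`, we get `0 ≤ S(a) ≤ 1` and `A S(a) ≥ 0`. Traces of products of
positive matrices are nonnegative, so `Tr(ρ S(a)) ≤ Tr ρ = 1` and `e^a Tr(σ S(a)) ≤ Tr(ρ S(a))`;
adding these gives `α(a) + e^a β(a) ≤ 1`.
-/

open scoped ComplexOrder

open scoped MatrixOrder
open Matrix

namespace Matrix

variable {m 𝕜 : Type*} [Fintype m] [DecidableEq m] [RCLike 𝕜]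

theorem trace_mul_nonneg {X Y : Matrix m m 𝕜} (hX : 0 ≤ X) (hY : 0 ≤ Y) :
    0 ≤ (X * Y).trace := by
  have hsqrt : IsSelfAdjoint (CFC.sqrt Y) := (CFC.sqrt_nonneg Y).isSelfAdjoint
  have hcycle : (X * Y).trace = (CFC.sqrt Y * X * CFC.sqrt Y).trace := by
    nth_rw 1 [← CFC.sqrt_mul_sqrt_self Y hY]
    rw [← mul_assoc, trace_mul_cycle]
  rw [hcycle]
  exact (hsqrt.conjugate_nonneg hX).posSemidef.trace_nonneg

theorem trace_mul_le_trace_mul {X Y Z : Matrix m m 𝕜} (hX : 0 ≤ X) (hYZ : Y ≤ Z) :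
    (X * Y).trace ≤ (X * Z).trace := by
  simpa [mul_sub, trace_sub] using trace_mul_nonneg hX (sub_nonneg.mpr hYZ)

end Matrix

section posProj

variable {m : Type*} [Fintype m] [DecidableEq m]

theorem posProj_eq_cfc (A : Matrix m m ℂ) :
    posProj A = cfc (fun x : ℝ => if 0 < x then 1 else 0) A := by
  by_cases hA : A.IsHermitian
  · rw [hA.cfc_eq, IsHermitian.cfc, posProj, dif_pos hA, Unitary.conjStarAlgAut_apply]
    congr 3
    funext i
    split_ifs with h <;> simp [h]
  · rw [posProj, dif_neg hA, cfc_apply_of_not_predicate A (p := IsSelfAdjoint) hA]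

theorem posProj_le_one (A : Matrix m m ℂ) : posProj A ≤ 1 := by
  rw [posProj_eq_cfc]
  exact cfc_le_one _ _ fun x _ => by split_ifs <;> norm_num

theorem mul_posProj_nonneg (A : Matrix m m ℂ) : 0 ≤ A * posProj A := by
  by_cases hA : IsSelfAdjoint A
  · rw [posProj_eq_cfc]
    nth_rw 1 [← cfc_id' ℝ A]
    rw [← cfc_mul _ _ A (finite_real_spectrum.continuousOn _) (finite_real_spectrum.continuousOn _)]
    refine cfc_nonneg fun x _ => ?_
    split_ifs with h
    exacts [by simpa using h.le, by simp]
  · rw [posProj_eq_cfc, cfc_apply_of_not_predicate A hA, mul_zero]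

end posProj

theorem alpha_add_exp_mul_beta_le_one_general {m : Type*} [Fintype m] [DecidableEq m]
    (ρ σ : Matrix m m ℂ) (hρ : ρ.PosSemidef) (hρ1 : ρ.trace = 1)
    (a : ℝ) :
    (1 - (ρ * posProj (ρ - (Real.exp a : ℂ) • σ)).trace.re) +
        Real.exp a * (σ * posProj (ρ - (Real.exp a : ℂ) • σ)).trace.re ≤ 1 ∧
      (σ * posProj (ρ - (Real.exp a : ℂ) • σ)).trace.re ≤ Real.exp (-a) := by
  set A := ρ - (Real.exp a : ℂ) • σ
  have hρS : (ρ * posProj A).trace ≤ 1 := by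
    simpa [hρ1] using trace_mul_le_trace_mul hρ.nonneg (posProj_le_one A)
  have hσS : (Real.exp a : ℂ) * (σ * posProj A).trace ≤ (ρ * posProj A).trace := by
    have h := (mul_posProj_nonneg A).posSemidef.trace_nonneg
    rwa [sub_mul, trace_sub, smul_mul_assoc, trace_smul, smul_eq_mul, sub_nonneg] at h
  have hρS_re : (ρ * posProj A).trace.re ≤ 1 := Complex.re_le_re hρS
  have hσS_re : Real.exp a * (σ * posProj A).trace.re ≤ (ρ * posProj A).trace.re := by
    simpa only [Complex.re_ofReal_mul] using Complex.re_le_re hσS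
  refine ⟨by linarith, ?_⟩
  rw [Real.exp_neg, ← mul_one (Real.exp a)⁻¹, le_inv_mul_iff₀ (Real.exp_pos a)]
  linarith

/-- For the likelihood test `S(a) = {ρ − e^a σ > 0}`, one has
`α(a) + e^a β(a) ≤ 1`; in particular `β(a) ≤ e^{-a}`. -/
theorem alpha_add_exp_mul_beta_le_one {m : Type*} [Fintype m] [DecidableEq m]
    (ρ σ : Matrix m m ℂ) (hρ : ρ.PosSemidef) (hρ1 : ρ.trace = 1)
    (hσ : σ.PosSemidef) (a : ℝ) :
    (1 - (ρ * posProj (ρ - (Real.exp a : ℂ) • σ)).trace.re) +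
        Real.exp a * (σ * posProj (ρ - (Real.exp a : ℂ) • σ)).trace.re ≤ 1 ∧
      (σ * posProj (ρ - (Real.exp a : ℂ) • σ)).trace.re ≤ Real.exp (-a) :=
  alpha_add_exp_mul_beta_le_one_general ρ σ hρ hρ1 a
end

section
/- Monotonicity of quantum likelihood-test error probabilities: define α(a) = Tr(ρ {ρ − e^{a}σ ≤ 0}) and β(a) = Tr(σ {ρ − e^{a}σ > 0}) for a density operator ρ and positive semidefinite σ. Then for all a < b, α(a) ≤ α(b) and β(a) ≥ β(b). -/
open scoped ComplexOrder

/-- The spectral projection onto the eigenspaces of nonpositive eigenvalues. -/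
noncomputable def nonposProj {m : Type*} [Fintype m] [DecidableEq m]
    (A : Matrix m m ℂ) : Matrix m m ℂ :=
  if hA : A.IsHermitian then
    (hA.eigenvectorUnitary : Matrix m m ℂ) *
      Matrix.diagonal (fun i => if hA.eigenvalues i ≤ 0 then (1 : ℂ) else 0) *
      star (hA.eigenvectorUnitary : Matrix m m ℂ)
  else 0

/-!
For Hermitian `X`, the projection `{X > 0}` maximizes `Re Tr(X T)` over all tests `0 ≤ T ≤ 1`
(quantum Neyman–Pearson): `X{X > 0} - X T = X₊(1 - T) + X₋ T` with `X₊ = X{X > 0} ≥ 0` and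
`X₋ = -X{X ≤ 0} ≥ 0`, and the trace of a product of positive matrices is nonnegative.

Write `r c = Tr(ρ {ρ - cσ > 0})` and `s c = Tr(σ {ρ - cσ > 0})`. Comparing the optimal test
at `c` with the one at `d`, and vice versa, gives `r d - c s d ≤ r c - c s c` and
`r c - d s c ≤ r d - d s d`. Adding them, `(d - c)(s c - s d) ≥ 0`, so `s` is antitone; then
`r d - r c ≤ c (s d - s c) ≤ 0` for `c ≥ 0`. Finally `α(a) = Tr ρ - r(eᵃ)` as
`{X ≤ 0} = 1 - {X > 0}`.
-/

namespace Matrix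

lemma isHermitian_sub_real_smul {m : Type*} {ρ σ : Matrix m m ℂ} (hρ : ρ.IsHermitian)
    (hσ : σ.IsHermitian) (c : ℝ) : (ρ - (c : ℂ) • σ).IsHermitian :=
  hρ.sub (hσ.smul (Complex.conj_ofReal c))

open scoped MatrixOrder

variable {m : Type*} [Fintype m] [DecidableEq m]

lemma trace_mul_nonneg_s4 {A B : Matrix m m ℂ} (hA : 0 ≤ A) (hB : 0 ≤ B) :
    0 ≤ (A * B).trace := by
  have hconj : 0 ≤ CFC.sqrt B * A * CFC.sqrt B :=
    conjugate_nonneg_of_nonneg hA (CFC.sqrt_nonneg B)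
  rw [← CFC.sqrt_mul_sqrt_self B hB, ← mul_assoc, trace_mul_cycle]
  exact (nonneg_iff_posSemidef.1 hconj).trace_nonneg

lemma posProj_eq_cfc {X : Matrix m m ℂ} (hX : X.IsHermitian) :
    posProj X = cfc (fun x : ℝ => if 0 < x then 1 else 0) X := by
  rw [hX.cfc_eq, IsHermitian.cfc, posProj, dif_pos hX, Unitary.conjStarAlgAut_apply]
  congr! with i
  simp [apply_ite]

lemma nonposProj_eq_cfc {X : Matrix m m ℂ} (hX : X.IsHermitian) :
    nonposProj X = cfc (fun x : ℝ => if x ≤ 0 then 1 else 0) X := by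
  rw [hX.cfc_eq, IsHermitian.cfc, nonposProj, dif_pos hX, Unitary.conjStarAlgAut_apply]
  congr! with i
  simp [apply_ite]

lemma nonposProj_eq_one_sub_posProj {X : Matrix m m ℂ} (hX : X.IsHermitian) :
    nonposProj X = 1 - posProj X := by
  rw [eq_sub_iff_add_eq', posProj_eq_cfc hX, nonposProj_eq_cfc hX, ← cfc_add _ _ _
    (X.finite_real_spectrum.continuousOn _) (X.finite_real_spectrum.continuousOn _)]
  refine (cfc_congr fun x _ => ?_).trans (cfc_const_one ℝ X)
  split_ifs <;> grind

lemma posProj_nonneg {X : Matrix m m ℂ} (hX : X.IsHermitian) : 0 ≤ posProj X := by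
  rw [posProj_eq_cfc hX]
  exact cfc_nonneg fun x _ => by split_ifs <;> norm_num

lemma posProj_le_one {X : Matrix m m ℂ} (hX : X.IsHermitian) : posProj X ≤ 1 := by
  rw [posProj_eq_cfc hX]
  exact cfc_le_one _ _ fun x _ => by split_ifs <;> norm_num

lemma mul_posProj_nonneg {X : Matrix m m ℂ} (hX : X.IsHermitian) : 0 ≤ X * posProj X := by
  nth_rw 1 [posProj_eq_cfc hX, ← cfc_id' ℝ X,
    ← cfc_mul _ _ _ (by fun_prop) (X.finite_real_spectrum.continuousOn _)]
  exact cfc_nonneg fun x _ => by split_ifs <;> linarith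

lemma mul_nonposProj_nonpos {X : Matrix m m ℂ} (hX : X.IsHermitian) : X * nonposProj X ≤ 0 := by
  nth_rw 1 [nonposProj_eq_cfc hX, ← cfc_id' ℝ X,
    ← cfc_mul _ _ _ (by fun_prop) (X.finite_real_spectrum.continuousOn _)]
  exact cfc_nonpos _ _ fun x _ => by split_ifs <;> linarith

lemma re_trace_mul_le_re_trace_mul_posProj {X T : Matrix m m ℂ} (hX : X.IsHermitian)
    (hT₀ : 0 ≤ T) (hT₁ : T ≤ 1) : (X * T).trace.re ≤ (X * posProj X).trace.re := by
  have hsplit : X * posProj X - X * T = X * posProj X * (1 - T) + -(X * nonposProj X) * T := by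
    rw [nonposProj_eq_one_sub_posProj hX]
    noncomm_ring
  have hgap : 0 ≤ (X * posProj X - X * T).trace := by
    rw [hsplit, trace_add]
    exact add_nonneg (trace_mul_nonneg_s4 (mul_posProj_nonneg hX) (sub_nonneg.2 hT₁))
      (trace_mul_nonneg_s4 (neg_nonneg.2 (mul_nonposProj_nonpos hX)) hT₀)
  rw [trace_sub] at hgap
  simpa using (Complex.le_def.1 hgap).1

lemma re_trace_sub_real_smul_mul (ρ σ P : Matrix m m ℂ) (c : ℝ) :
    ((ρ - (c : ℂ) • σ) * P).trace.re = (ρ * P).trace.re - c * (σ * P).trace.re := by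
  simp [sub_mul, trace_sub, trace_smul]

lemma re_trace_mul_nonposProj {X : Matrix m m ℂ} (hX : X.IsHermitian) (A : Matrix m m ℂ) :
    (A * nonposProj X).trace.re = A.trace.re - (A * posProj X).trace.re := by
  simp [nonposProj_eq_one_sub_posProj hX, mul_sub, trace_sub]

variable {ρ σ : Matrix m m ℂ}

lemma re_trace_mul_posProj_sub_real_smul_le (hρ : ρ.IsHermitian) (hσ : σ.IsHermitian)
    (c d : ℝ) :
    (ρ * posProj (ρ - (d : ℂ) • σ)).trace.re -
        c * (σ * posProj (ρ - (d : ℂ) • σ)).trace.re ≤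
      (ρ * posProj (ρ - (c : ℂ) • σ)).trace.re -
        c * (σ * posProj (ρ - (c : ℂ) • σ)).trace.re := by
  have hX := isHermitian_sub_real_smul hρ hσ
  simpa only [re_trace_sub_real_smul_mul] using
    re_trace_mul_le_re_trace_mul_posProj (hX c) (posProj_nonneg (hX d)) (posProj_le_one (hX d))

lemma antitone_re_trace_right_mul_posProj_sub_real_smul (hρ : ρ.IsHermitian)
    (hσ : σ.IsHermitian) :
    Antitone fun c : ℝ => (σ * posProj (ρ - (c : ℂ) • σ)).trace.re := by
  intro c d hcd
  rcases hcd.eq_or_lt with rfl | hlt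
  · exact le_rfl
  have hcd' := re_trace_mul_posProj_sub_real_smul_le hρ hσ c d
  have hdc := re_trace_mul_posProj_sub_real_smul_le hρ hσ d c
  nlinarith

lemma antitoneOn_re_trace_left_mul_posProj_sub_real_smul (hρ : ρ.IsHermitian)
    (hσ : σ.IsHermitian) :
    AntitoneOn (fun c : ℝ => (ρ * posProj (ρ - (c : ℂ) • σ)).trace.re) (Set.Ici 0) := by
  intro c hc d _ hcd
  have hσ_anti := antitone_re_trace_right_mul_posProj_sub_real_smul hρ hσ hcd
  have hcd' := re_trace_mul_posProj_sub_real_smul_le hρ hσ c d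
  nlinarith [mul_le_mul_of_nonneg_left hσ_anti (Set.mem_Ici.1 hc)]

end Matrix

open Matrix in
theorem alpha_mono_beta_antimono_general {m : Type*} [Fintype m] [DecidableEq m]
    (ρ σ : Matrix m m ℂ) (hρ : ρ.PosSemidef)
    (hσ : σ.PosSemidef) (a b : ℝ) (hab : a < b) :
    (ρ * nonposProj (ρ - (Real.exp a : ℂ) • σ)).trace.re ≤
        (ρ * nonposProj (ρ - (Real.exp b : ℂ) • σ)).trace.re ∧
      (σ * posProj (ρ - (Real.exp b : ℂ) • σ)).trace.re ≤
        (σ * posProj (ρ - (Real.exp a : ℂ) • σ)).trace.re := by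
  have hexp : Real.exp a ≤ Real.exp b := Real.exp_le_exp.2 hab.le
  refine ⟨?_, antitone_re_trace_right_mul_posProj_sub_real_smul hρ.1 hσ.1 hexp⟩
  rw [re_trace_mul_nonposProj (isHermitian_sub_real_smul hρ.1 hσ.1 _),
    re_trace_mul_nonposProj (isHermitian_sub_real_smul hρ.1 hσ.1 _)]
  exact sub_le_sub_left (antitoneOn_re_trace_left_mul_posProj_sub_real_smul hρ.1 hσ.1
    (Real.exp_pos a).le (Real.exp_pos b).le hexp) _

/-- Monotonicity: `α(a) = Tr(ρ {ρ − e^a σ ≤ 0})` is nondecreasing and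
`β(a) = Tr(σ {ρ − e^a σ > 0})` is nonincreasing in `a`. -/
theorem alpha_mono_beta_antimono {m : Type*} [Fintype m] [DecidableEq m]
    (ρ σ : Matrix m m ℂ) (hρ : ρ.PosSemidef) (hρ1 : ρ.trace = 1)
    (hσ : σ.PosSemidef) (a b : ℝ) (hab : a < b) :
    (ρ * nonposProj (ρ - (Real.exp a : ℂ) • σ)).trace.re ≤
        (ρ * nonposProj (ρ - (Real.exp b : ℂ) • σ)).trace.re ∧
      (σ * posProj (ρ - (Real.exp b : ℂ) • σ)).trace.re ≤
        (σ * posProj (ρ - (Real.exp a : ℂ) • σ)).trace.re :=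
  alpha_mono_beta_antimono_general ρ σ hρ hσ a b hab
end

section
/- Tradeoff lemma for exponents: let (α_n(a)), (β_n(a)), (α_n), (β_n) be sequences in [0,1] (with β-values nonnegative) satisfying the Neyman–Pearson inequality α_n(a) + e^{na} β_n(a) ≤ α_n + e^{na} β_n for all n. Define ζ(a) = liminf −(1/n) log β_n(a), ζ[T] = liminf −(1/n) log β_n, η[T] = liminf −(1/n) log α_n. Then ζ(a) ≥ min( ζ[T], a + η[T] ). -/
open Filter

/-- The liminf exponential rate `liminf -(1/n) log p n`, with the convention
that the exponent is `+∞` when `p n = 0` (i.e. `log 0 = -∞`). -/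
noncomputable def liminfExpRate (p : ℕ → ℝ) : EReal :=
  Filter.liminf (fun n => if p n = 0 then (⊤ : EReal)
    else ((-(1 / (n : ℝ)) * Real.log (p n) : ℝ) : EReal)) Filter.atTop

/-- The limsup exponential rate `limsup -(1/n) log p n`, with the convention
that the exponent is `+∞` when `p n = 0`. -/
noncomputable def limsupExpRate (p : ℕ → ℝ) : EReal :=
  Filter.limsup (fun n => if p n = 0 then (⊤ : EReal)
    else ((-(1 / (n : ℝ)) * Real.log (p n) : ℝ) : EReal)) Filter.atTop


/-! The Neyman–Pearson inequality gives `β_n(a) ≤ e^{-na} α_n + β_n`. For every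
`c < min (ζ[T], a + η[T])` both terms on the right are eventually below `e^{-nc}`, so
`β_n(a) ≤ 2 e^{-nc}`, and a constant factor does not change an exponential rate. -/

open Real

noncomputable def expRateAt (p : ℕ → ℝ) (n : ℕ) : EReal :=
  if p n = 0 then ⊤ else ((-(1 / (n : ℝ)) * log (p n) : ℝ) : EReal)

lemma liminfExpRate_eq (p : ℕ → ℝ) : liminfExpRate p = liminf (expRateAt p) atTop := rfl

lemma coe_lt_expRateAt_iff {p : ℕ → ℝ} {n : ℕ} (hp : 0 ≤ p n) (hn : 0 < n) (c : ℝ) :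
    (c : EReal) < expRateAt p n ↔ p n < exp (-n * c) := by
  unfold expRateAt
  split_ifs with h0
  · simp [h0, exp_pos]
  · have hpos : 0 < p n := hp.lt_of_ne' h0
    have hn' : (0 : ℝ) < n := Nat.cast_pos.mpr hn
    rw [EReal.coe_lt_coe_iff, ← log_lt_iff_lt_exp hpos, neg_mul, neg_mul, one_div,
      lt_neg, ← div_eq_inv_mul, div_lt_iff₀ hn', neg_mul, mul_comm]

lemma eventually_lt_exp_of_lt_liminfExpRate {p : ℕ → ℝ} (hp : ∀ n, 0 ≤ p n) {c : ℝ}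
    (hc : (c : EReal) < liminfExpRate p) : ∀ᶠ n in atTop, p n < exp (-n * c) := by
  filter_upwards [eventually_lt_of_lt_liminf hc, eventually_gt_atTop 0] with n hlt hn
  exact (coe_lt_expRateAt_iff (hp n) hn c).mp hlt

lemma eventually_mul_exp_lt_exp (K : ℝ) {c c' : ℝ} (hcc' : c < c') :
    ∀ᶠ n : ℕ in atTop, K * exp (-n * c') < exp (-n * c) := by
  have hgrowth : Tendsto (fun n : ℕ => exp (n * (c' - c))) atTop atTop :=
    tendsto_exp_atTop.comp <|
      tendsto_natCast_atTop_atTop.atTop_mul_const (sub_pos.mpr hcc')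
  filter_upwards [hgrowth.eventually_gt_atTop K] with n hn
  calc K * exp (-n * c') < exp (n * (c' - c)) * exp (-n * c') :=
        mul_lt_mul_of_pos_right hn (exp_pos _)
    _ = exp (-n * c) := by rw [← exp_add]; ring_nf

lemma le_liminfExpRate_of_eventually_le {p : ℕ → ℝ} (hp : ∀ n, 0 ≤ p n) (K : ℝ) {b : EReal}
    (h : ∀ c : ℝ, (c : EReal) < b → ∀ᶠ n in atTop, p n ≤ K * exp (-n * c)) :
    b ≤ liminfExpRate p := by
  rw [liminfExpRate_eq, le_liminf_iff]
  intro y hy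
  induction y using EReal.rec with
  | bot =>
    refine Eventually.of_forall fun n => ?_
    unfold expRateAt
    split_ifs
    exacts [bot_lt_top, EReal.bot_lt_coe _]
  | top => exact absurd hy not_top_lt
  | coe c =>
    obtain ⟨c', hcc', hc'b⟩ := EReal.exists_between_coe_real hy
    filter_upwards [h c' hc'b, eventually_mul_exp_lt_exp K (EReal.coe_lt_coe_iff.mp hcc'),
      eventually_gt_atTop 0] with n hle hlt hn
    exact (coe_lt_expRateAt_iff (hp n) hn c).mpr (hle.trans_lt hlt)

/-- Tradeoff lemma for exponents: if
`αₙ(a) + e^{na} βₙ(a) ≤ αₙ + e^{na} βₙ` for all `n`, then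
`ζ(a) ≥ min (ζ[T], a + η[T])`. -/
theorem zeta_ge_min (a : ℝ) (αa βa α β : ℕ → ℝ)
    (hαa : ∀ n, αa n ∈ Set.Icc (0 : ℝ) 1) (hα : ∀ n, α n ∈ Set.Icc (0 : ℝ) 1)
    (hβa : ∀ n, 0 ≤ βa n) (hβ : ∀ n, 0 ≤ β n)
    (hNP : ∀ n : ℕ, αa n + Real.exp (n * a) * βa n ≤ α n + Real.exp (n * a) * β n) :
    min (liminfExpRate β) ((a : EReal) + liminfExpRate α) ≤ liminfExpRate βa := by
  refine le_liminfExpRate_of_eventually_le hβa 2 fun c hc => ?_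
  have hβc := eventually_lt_exp_of_lt_liminfExpRate hβ (hc.trans_le (min_le_left _ _))
  have hαc : ∀ᶠ n in atTop, α n < exp (-n * (c - a)) := by
    refine eventually_lt_exp_of_lt_liminfExpRate (fun n => (hα n).1) ?_
    rw [EReal.coe_sub, EReal.sub_lt_iff (by simp) (by simp), add_comm]
    exact hc.trans_le (min_le_right _ _)
  filter_upwards [hβc, hαc] with n hβn hαn
  calc βa n ≤ exp (-(n * a)) * α n + β n := by
        rw [← mul_le_mul_iff_right₀ (exp_pos (n * a)), mul_add, ← mul_assoc, ← exp_add,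
          add_neg_cancel, exp_zero, one_mul]
        linarith [hNP n, (hαa n).1]
    _ ≤ exp (-(n * a)) * exp (-n * (c - a)) + exp (-n * c) := by gcongr
    _ = 2 * exp (-n * c) := by rw [← exp_add]; ring_nf
end

section
/- Symmetric tradeoff lemma: under the hypothesis α_n(a) + e^{na} β_n(a) ≤ α_n + e^{na} β_n for all n, with η(a) = liminf −(1/n) log α_n(a), η[T] = liminf −(1/n) log α_n, ζ[T] = liminf −(1/n) log β_n, one has η(a) ≥ min( η[T], −a + ζ[T] ). -/
open Filter

/-- Symmetric tradeoff lemma: under the Neyman–Pearson type inequality,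
`η(a) ≥ min (η[T], -a + ζ[T])`. -/
theorem eta_ge_min (a : ℝ) (αa βa α β : ℕ → ℝ)
    (hαa : ∀ n, αa n ∈ Set.Icc (0 : ℝ) 1) (hα : ∀ n, α n ∈ Set.Icc (0 : ℝ) 1)
    (hβa : ∀ n, 0 ≤ βa n) (hβ : ∀ n, 0 ≤ β n)
    (hNP : ∀ n : ℕ, αa n + Real.exp (n * a) * βa n ≤ α n + Real.exp (n * a) * β n) :
    min (liminfExpRate α) (((-a : ℝ) : EReal) + liminfExpRate β) ≤ liminfExpRate αa := by
  refine le_of_forall_lt fun b hb => ?_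
  obtain ⟨c, hbc, hc⟩ := EReal.exists_between_coe_real hb
  obtain ⟨d, hcd, hd⟩ := EReal.exists_between_coe_real hc
  rw [lt_min_iff] at hd
  obtain ⟨hdα, hdβ⟩ := hd
  have hcd' : c < d := by exact_mod_cast hcd
  have hdβ' : ((d + a : ℝ) : EReal) < liminfExpRate β := by
    have h := EReal.add_lt_add_right_coe hdβ a
    have e0 : (((-a : ℝ) : EReal) + ((a : ℝ) : EReal)) = 0 := by
      rw [← EReal.coe_add]; norm_num
    rw [add_comm ((-a : ℝ) : EReal) (liminfExpRate β), add_assoc, e0, add_zero,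
      ← EReal.coe_add] at h
    exact h
  rw [liminfExpRate] at hdα hdβ'
  have hA := Filter.eventually_lt_of_lt_liminf hdα
  have hB := Filter.eventually_lt_of_lt_liminf hdβ'
  have hlog : ∀ᶠ n : ℕ in atTop, Real.log 2 / (n : ℝ) < d - c :=
    (tendsto_const_div_atTop_nhds_zero_nat (Real.log 2)).eventually_lt_const
      (by linarith)
  have hn1 : ∀ᶠ n : ℕ in atTop, 1 ≤ n := eventually_ge_atTop 1
  refine lt_of_lt_of_le hbc (Filter.le_liminf_of_le (by isBoundedDefault) ?_)
  filter_upwards [hA, hB, hlog, hn1] with n hAn hBn hlogn hn1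
  by_cases h0 : αa n = 0
  · simp [h0]
  · rw [if_neg h0]
    have hnpos : (0 : ℝ) < n := by exact_mod_cast hn1
    have h1 : (1 / (n : ℝ)) * n = 1 := by field_simp
    have hαapos : 0 < αa n := lt_of_le_of_ne (hαa n).1 (Ne.symm h0)
    -- α n < exp (-(n*d))
    have hαlt : α n < Real.exp (-((n : ℝ) * d)) := by
      by_cases hz : α n = 0
      · rw [hz]; exact Real.exp_pos _
      · rw [if_neg hz] at hAn
        have hA' : d < -(1 / (n : ℝ)) * Real.log (α n) := by exact_mod_cast hAn
        have hαpos : 0 < α n := lt_of_le_of_ne (hα n).1 (Ne.symm hz)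
        have hm := mul_lt_mul_of_pos_right hA' hnpos
        have e : -(1 / (n : ℝ)) * Real.log (α n) * n = -Real.log (α n) := by
          field_simp
        rw [e] at hm
        have hL : Real.log (α n) < -((n : ℝ) * d) := by linarith
        have := Real.exp_lt_exp.mpr hL
        rwa [Real.exp_log hαpos] at this
    -- β n < exp (-(n*(d+a)))
    have hβlt : β n < Real.exp (-((n : ℝ) * (d + a))) := by
      by_cases hz : β n = 0
      · rw [hz]; exact Real.exp_pos _
      · rw [if_neg hz] at hBn
        have hB' : d + a < -(1 / (n : ℝ)) * Real.log (β n) := by exact_mod_cast hBn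
        have hβpos : 0 < β n := lt_of_le_of_ne (hβ n) (Ne.symm hz)
        have hm := mul_lt_mul_of_pos_right hB' hnpos
        have e : -(1 / (n : ℝ)) * Real.log (β n) * n = -Real.log (β n) := by
          field_simp
        rw [e] at hm
        have hL : Real.log (β n) < -((n : ℝ) * (d + a)) := by linarith
        have := Real.exp_lt_exp.mpr hL
        rwa [Real.exp_log hβpos] at this
    have h2 : Real.exp ((n : ℝ) * a) * β n < Real.exp (-((n : ℝ) * d)) := by
      calc Real.exp ((n : ℝ) * a) * β n
          < Real.exp ((n : ℝ) * a) * Real.exp (-((n : ℝ) * (d + a))) :=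
            mul_lt_mul_of_pos_left hβlt (Real.exp_pos _)
        _ = Real.exp (-((n : ℝ) * d)) := by rw [← Real.exp_add]; congr 1; ring
    have hup : αa n < 2 * Real.exp (-((n : ℝ) * d)) := by
      have hnp := hNP n
      have hext : 0 ≤ Real.exp ((n : ℝ) * a) * βa n :=
        mul_nonneg (Real.exp_pos _).le (hβa n)
      linarith
    have hlog2 : Real.log (αa n) < Real.log 2 - (n : ℝ) * d := by
      have h3 := Real.log_lt_log hαapos hup
      rw [Real.log_mul two_ne_zero (Real.exp_ne_zero _), Real.log_exp] at h3
      linarith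
    have hfin : c ≤ -(1 / (n : ℝ)) * Real.log (αa n) := by
      have hm := mul_lt_mul_of_pos_left hlog2 (by positivity : (0 : ℝ) < 1 / n)
      have e : (1 / (n : ℝ)) * (Real.log 2 - (n : ℝ) * d) = Real.log 2 / n - d := by
        field_simp
      rw [e] at hm
      linarith
    exact_mod_cast hfin
end

section
/- Consequences of the tradeoff lemma: suppose for all real x and all tests the Neyman–Pearson inequality holds, and define η(a) = liminf −(1/n) log α_n(a), ζ(a) = liminf −(1/n) log β_n(a). Then for any a < b: (i) if ζ(a) < ζ(b) then ζ(a) ≥ a + η(b); (ii) if η(a) > η(b) then η(b) ≥ −b + ζ(a). -/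
open Filter

/-!
The exponent `liminfExpRate p` of a nonnegative sequence is minus its upper exponential growth
rate `ExpGrowth.expGrowthSup`, so it turns sums into minima and multiplication by `e^{-nx}` into
a shift by `x`. The Neyman–Pearson inequality between the tests at `a` and `b` bounds
`β_n(a) ≤ e^{-na} α_n(b) + β_n(b)` and `α_n(b) ≤ e^{nb} β_n(a) + α_n(a)`; the exponent of each
left side is then the minimum of the exponents of the two summands, and the hypothesis of each
part says that this minimum is not attained at the second summand.
-/

open ExpGrowth

theorem liminfExpRate_eq_neg_expGrowthSup {p : ℕ → ℝ} (hp : ∀ n, 0 ≤ p n) :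
    liminfExpRate p = -expGrowthSup (fun n => ENNReal.ofReal (p n)) := by
  rw [expGrowthSup_def, ← LinearGrowth.linearGrowthInf_neg]
  refine liminf_congr ((eventually_ne_atTop 0).mono fun n hn => ?_)
  simp only [Pi.neg_apply, Function.comp_apply]
  rcases (hp n).eq_or_lt with h | h
  · rw [← h, if_pos rfl, ENNReal.ofReal_zero, ENNReal.log_zero, EReal.neg_bot,
      EReal.top_div_of_pos_ne_top (by exact_mod_cast Nat.pos_of_ne_zero hn)
        (EReal.natCast_ne_top n)]
  · rw [if_neg h.ne', ENNReal.log_ofReal_of_pos h,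
      ← EReal.coe_neg, ← EReal.coe_natCast, ← EReal.coe_div]
    congr 1
    ring

theorem liminfExpRate_anti {p q : ℕ → ℝ} (hp : ∀ n, 0 ≤ p n) (hpq : ∀ n, p n ≤ q n) :
    liminfExpRate q ≤ liminfExpRate p := by
  rw [liminfExpRate_eq_neg_expGrowthSup hp,
    liminfExpRate_eq_neg_expGrowthSup fun n => (hp n).trans (hpq n), EReal.neg_le_neg_iff]
  exact expGrowthSup_monotone fun n => ENNReal.ofReal_le_ofReal (hpq n)

theorem liminfExpRate_add {u v : ℕ → ℝ} (hu : ∀ n, 0 ≤ u n) (hv : ∀ n, 0 ≤ v n) :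
    liminfExpRate (u + v) = min (liminfExpRate u) (liminfExpRate v) := by
  rw [liminfExpRate_eq_neg_expGrowthSup hu, liminfExpRate_eq_neg_expGrowthSup hv,
    liminfExpRate_eq_neg_expGrowthSup (p := u + v) fun n => add_nonneg (hu n) (hv n)]
  have hofReal : (fun n => ENNReal.ofReal ((u + v) n)) =
      (fun n => ENNReal.ofReal (u n)) + fun n => ENNReal.ofReal (v n) :=
    funext fun n => ENNReal.ofReal_add (hu n) (hv n)
  rw [hofReal, expGrowthSup_add]
  exact EReal.neg_strictAnti.antitone.map_max

theorem liminfExpRate_exp_neg_mul {u : ℕ → ℝ} (hu : ∀ n, 0 ≤ u n) (x : ℝ) :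
    liminfExpRate (fun n => Real.exp (-(n * x)) * u n) = x + liminfExpRate u := by
  rw [liminfExpRate_eq_neg_expGrowthSup hu,
    liminfExpRate_eq_neg_expGrowthSup fun n => mul_nonneg (Real.exp_pos _).le (hu n)]
  have hofReal : (fun n : ℕ => ENNReal.ofReal (Real.exp (-(n * x)) * u n)) =
      (fun n : ℕ => EReal.exp ((-x : ℝ) * n)) * fun n => ENNReal.ofReal (u n) := by
    funext n
    rw [Pi.mul_apply, ENNReal.ofReal_mul (Real.exp_pos _).le, ← EReal.coe_natCast,
      ← EReal.coe_mul, EReal.exp_coe, neg_mul, mul_comm x]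
  have hexp : expGrowthSup (fun n : ℕ => EReal.exp ((-x : ℝ) * n)) = (-x : ℝ) :=
    expGrowthSup_exp
  have hmul : expGrowthSup ((fun n : ℕ => EReal.exp ((-x : ℝ) * n)) *
      fun n => ENNReal.ofReal (u n)) = (-x : ℝ) + expGrowthSup (fun n => ENNReal.ofReal (u n)) := by
    refine le_antisymm ((expGrowthSup_mul_le ?_ ?_).trans_eq (by rw [hexp]))
      (le_expGrowthSup_mul'.trans_eq' (by rw [expGrowthInf_exp]))
    · exact .inl (by rw [hexp]; exact EReal.coe_ne_bot _)
    · exact .inl (by rw [hexp]; exact EReal.coe_ne_top _)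
  rw [hofReal, hmul, EReal.neg_add (by simp) (by simp), sub_eq_add_neg, EReal.coe_neg,
    neg_neg]

theorem liminfExpRate_le_of_le_add_of_lt {p u v : ℕ → ℝ} (hp : ∀ n, 0 ≤ p n)
    (hu : ∀ n, 0 ≤ u n) (hv : ∀ n, 0 ≤ v n) (hpuv : ∀ n, p n ≤ u n + v n)
    (hlt : liminfExpRate p < liminfExpRate v) :
    liminfExpRate u ≤ liminfExpRate p := by
  have hsum := liminfExpRate_anti (q := u + v) hp hpuv
  rw [liminfExpRate_add hu hv, min_le_iff] at hsum
  exact hsum.resolve_right hlt.not_ge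

theorem le_exp_neg_mul_add_of_add_exp_mul_le {α₁ α₂ β₁ β₂ t : ℝ} (hα₁ : 0 ≤ α₁)
    (h : α₁ + Real.exp t * β₁ ≤ α₂ + Real.exp t * β₂) :
    β₁ ≤ Real.exp (-t) * α₂ + β₂ := by
  refine le_of_mul_le_mul_left ?_ (Real.exp_pos t)
  rw [mul_add, ← mul_assoc, ← Real.exp_add, add_neg_cancel, Real.exp_zero, one_mul]
  linarith

theorem zeta_eta_consequences_general (αf βf : ℝ → ℕ → ℝ)
    (hα : ∀ x n, αf x n ∈ Set.Icc (0 : ℝ) 1) (hβ : ∀ x n, 0 ≤ βf x n)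
    (hNP : ∀ x y : ℝ, ∀ n : ℕ,
      αf x n + Real.exp (n * x) * βf x n ≤ αf y n + Real.exp (n * x) * βf y n)
    (a b : ℝ) :
    (liminfExpRate (βf a) < liminfExpRate (βf b) →
      (a : EReal) + liminfExpRate (αf b) ≤ liminfExpRate (βf a)) ∧
    (liminfExpRate (αf b) < liminfExpRate (αf a) →
      ((-b : ℝ) : EReal) + liminfExpRate (βf a) ≤ liminfExpRate (αf b)) := by
  have hα₀ x n : 0 ≤ αf x n := (hα x n).1
  have hexp_mul {u : ℕ → ℝ} (hu : ∀ n, 0 ≤ u n) (x : ℝ) (n : ℕ) :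
      0 ≤ Real.exp (-(n * x)) * u n := mul_nonneg (Real.exp_pos _).le (hu n)
  constructor
  · intro hζ
    have hβ_le n : βf a n ≤ Real.exp (-(n * a)) * αf b n + βf b n :=
      le_exp_neg_mul_add_of_add_exp_mul_le (hα₀ a n) (hNP a b n)
    rw [← liminfExpRate_exp_neg_mul (hα₀ b)]
    exact liminfExpRate_le_of_le_add_of_lt (hβ a) (hexp_mul (hα₀ b) a) (hβ b) hβ_le hζ
  · intro hη
    have hα_le n : αf b n ≤ Real.exp (-(n * -b)) * βf a n + αf a n := by
      rw [mul_neg, neg_neg]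
      linarith [hNP b a n, mul_nonneg (Real.exp_pos (n * b)).le (hβ b n)]
    rw [← liminfExpRate_exp_neg_mul (hβ a)]
    exact liminfExpRate_le_of_le_add_of_lt (hα₀ b) (hexp_mul (hβ a) (-b)) (hα₀ a) hα_le hη

/-- Consequences of the tradeoff lemma for the family of likelihood tests:
for `a < b`, (i) if `ζ(a) < ζ(b)` then `ζ(a) ≥ a + η(b)`;
(ii) if `η(a) > η(b)` then `η(b) ≥ -b + ζ(a)`. -/
theorem zeta_eta_consequences (αf βf : ℝ → ℕ → ℝ)
    (hα : ∀ x n, αf x n ∈ Set.Icc (0 : ℝ) 1) (hβ : ∀ x n, 0 ≤ βf x n)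
    (hNP : ∀ x y : ℝ, ∀ n : ℕ,
      αf x n + Real.exp (n * x) * βf x n ≤ αf y n + Real.exp (n * x) * βf y n)
    (a b : ℝ) (hab : a < b) :
    (liminfExpRate (βf a) < liminfExpRate (βf b) →
      (a : EReal) + liminfExpRate (αf b) ≤ liminfExpRate (βf a)) ∧
    (liminfExpRate (αf b) < liminfExpRate (αf a) →
      ((-b : ℝ) : EReal) + liminfExpRate (βf a) ≤ liminfExpRate (αf b)) :=
  zeta_eta_consequences_general αf βf hα hβ hNP a b
end

section
/- Right continuity of the Stein exponent: the function ε ↦ B(ε), defined as the supremum over test sequences T with limsup_n α_n[T_n] ≤ ε of liminf_n −(1/n) log β_n[T_n], satisfies B(ε) = inf_{ε' > ε} B(ε') for every ε ∈ [0,1), and the supremum in the definition of B(ε) is attained by some test sequence. -/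
open Filter Topology

/-!
Let `I` be the infimum of `B` over `(ε, ∞)`; monotonicity gives `B ε ≤ I`. Take levels `a k ↓ ε`
and values `c k ↑ I`, and test sequences `T k` whose first-kind error is eventually below `a k`
and whose exponent terms are eventually above `c k`. Using at time `n` the largest `k ≤ n` for
which `T k` is already good at `n` gives a patched sequence with `limsup α ≤ ε` and exponent
`≥ I`. It is admissible at level `ε`, so `I ≤ B ε` and it attains the supremum. (If `I = ⊥`, a
sequence of tests with zero first-kind error, admissible since `ε ≥ 0`, already does.)
-/

-- `liminfExpRate p` unfolds to `liminf (fun n => expRateTerm n (p n)) atTop`.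
noncomputable def expRateTerm (n : ℕ) (p : ℝ) : EReal :=
  if p = 0 then ⊤ else ((-(1 / (n : ℝ)) * Real.log p : ℝ) : EReal)

theorem Nat.exists_tendsto_atTop_eventually_diag {P : ℕ → ℕ → Prop}
    (hP : ∀ k, ∀ᶠ n in atTop, P k n) :
    ∃ k : ℕ → ℕ, Tendsto k atTop atTop ∧ ∀ᶠ n in atTop, P (k n) n := by
  classical
  refine ⟨fun n => Nat.findGreatest (P · n) n, ?_, ?_⟩
  · refine tendsto_atTop.2 fun j => ?_
    filter_upwards [hP j, eventually_ge_atTop j] with n hjn hj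
    exact Nat.le_findGreatest hj hjn
  · filter_upwards [hP 0] with n h0n
    exact Nat.findGreatest_spec (P := (P · n)) (Nat.zero_le n) h0n

theorem exists_limsup_le_and_le_liminf_of_eventually {Test : ℕ → Type*}
    {α β : Type*} [ConditionallyCompleteLinearOrder α] [TopologicalSpace α] [OrderTopology α]
    [CompleteLinearOrder β] [TopologicalSpace β] [OrderTopology β]
    {x : ∀ n, Test n → α} {y : ∀ n, Test n → β} {b : α} (hx : ∀ n t, b ≤ x n t)
    {a : ℕ → α} {c : ℕ → β} {ε : α} {I : β}
    (ha : Tendsto a atTop (𝓝 ε)) (hc : Tendsto c atTop (𝓝 I)) (T : ℕ → ∀ n, Test n)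
    (hT : ∀ k, ∀ᶠ n in atTop, x n (T k n) ≤ a k ∧ c k ≤ y n (T k n)) :
    ∃ S : ∀ n, Test n,
      limsup (fun n => x n (S n)) atTop ≤ ε ∧ I ≤ liminf (fun n => y n (S n)) atTop := by
  obtain ⟨k, hk, hkT⟩ := Nat.exists_tendsto_atTop_eventually_diag hT
  refine ⟨fun n => T (k n) n, ?_, ?_⟩
  · calc limsup (fun n => x n (T (k n) n)) atTop
        ≤ limsup (a ∘ k) atTop :=
          limsup_le_limsup (hkT.mono fun n h => h.1)
            (isCoboundedUnder_le_of_le atTop fun n => hx n _) (ha.comp hk).isBoundedUnder_le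
      _ = ε := (ha.comp hk).limsup_eq
  · calc I = liminf (c ∘ k) atTop := (hc.comp hk).liminf_eq.symm
      _ ≤ liminf (fun n => y n (T (k n) n)) atTop := liminf_le_liminf (hkT.mono fun n h => h.2)

section SteinExponent

variable {Test : ℕ → Type*} (αf βf : ∀ n, Test n → ℝ)

noncomputable def steinExponent (ε : ℝ) : EReal :=
  sSup {z : EReal | ∃ T : ∀ n, Test n,
    limsup (fun n => αf n (T n)) atTop ≤ ε ∧ z = liminfExpRate (fun n => βf n (T n))}

variable {αf βf}

theorem liminfExpRate_le_steinExponent {ε : ℝ} {T : ∀ n, Test n}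
    (hT : limsup (fun n => αf n (T n)) atTop ≤ ε) :
    liminfExpRate (fun n => βf n (T n)) ≤ steinExponent αf βf ε :=
  le_sSup ⟨T, hT, rfl⟩

theorem steinExponent_mono : Monotone (steinExponent αf βf) := fun _ _ hab =>
  sSup_le_sSup fun _ ⟨T, hTα, hz⟩ => ⟨T, hTα.trans hab, hz⟩

theorem exists_eventually_le_and_le_expRateTerm (hα : ∀ n t, αf n t ≤ 1) {ε a : ℝ} {c : EReal}
    (hεa : ε < a) (hc : c < ⨅ ε' ∈ Set.Ioi ε, steinExponent αf βf ε') :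
    ∃ T : ∀ n, Test n, ∀ᶠ n in atTop, αf n (T n) ≤ a ∧ c ≤ expRateTerm n (βf n (T n)) := by
  obtain ⟨a', hεa', ha'⟩ := exists_between hεa
  have hcB : c < steinExponent αf βf a' := hc.trans_le (iInf₂_le a' hεa')
  obtain ⟨_, ⟨T, hTα, rfl⟩, hcT⟩ := lt_sSup_iff.1 hcB
  refine ⟨T, ?_⟩
  filter_upwards [eventually_lt_of_limsup_lt (hTα.trans_lt ha')
      (isBoundedUnder_of ⟨1, fun n => hα n (T n)⟩),
    eventually_lt_of_lt_liminf hcT] with n hnα hnβ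
  exact ⟨hnα.le, hnβ.le⟩

theorem exists_limsup_le_and_iInf_steinExponent_le (hα : ∀ n t, αf n t ∈ Set.Icc (0 : ℝ) 1)
    (hI : ∀ n, ∃ t, αf n t = 0) {ε : ℝ} (hε0 : 0 ≤ ε) :
    ∃ S : ∀ n, Test n, limsup (fun n => αf n (S n)) atTop ≤ ε ∧
      ⨅ ε' ∈ Set.Ioi ε, steinExponent αf βf ε' ≤ liminfExpRate (fun n => βf n (S n)) := by
  rcases eq_or_ne (⨅ ε' ∈ Set.Ioi ε, steinExponent αf βf ε') ⊥ with hI_bot | hI_bot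
  · choose S hS using hI
    refine ⟨S, ?_, hI_bot ▸ bot_le⟩
    simpa only [hS, limsup_const] using hε0
  obtain ⟨a, -, hεa, ha⟩ := exists_seq_strictAnti_tendsto ε
  obtain ⟨c, -, hcI, hc⟩ := exists_seq_strictMono_tendsto' (bot_lt_iff_ne_bot.2 hI_bot)
  choose T hT using fun k =>
    exists_eventually_le_and_le_expRateTerm (fun n t => (hα n t).2) (hεa k) (hcI k).2
  exact exists_limsup_le_and_le_liminf_of_eventually (y := fun n t => expRateTerm n (βf n t))
    (fun n t => (hα n t).1) ha hc T hT

end SteinExponent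

theorem B_right_continuous_and_attained_general {Test : ℕ → Type*}
    (αf βf : ∀ n, Test n → ℝ)
    (hα : ∀ n T, αf n T ∈ Set.Icc (0 : ℝ) 1)
    (hI : ∀ n, ∃ T, αf n T = 0)
    (B : ℝ → EReal)
    (hB : ∀ ε, B ε = sSup {z : EReal | ∃ T : ∀ n, Test n,
        Filter.limsup (fun n => αf n (T n)) Filter.atTop ≤ ε ∧
        z = liminfExpRate (fun n => βf n (T n))})
    (ε : ℝ) (hε0 : 0 ≤ ε) :
    (B ε = ⨅ ε' ∈ Set.Ioi ε, B ε') ∧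
    ∃ T : ∀ n, Test n,
      Filter.limsup (fun n => αf n (T n)) Filter.atTop ≤ ε ∧
      liminfExpRate (fun n => βf n (T n)) = B ε := by
  obtain rfl : B = steinExponent αf βf := funext hB
  obtain ⟨S, hSα, hSβ⟩ := exists_limsup_le_and_iInf_steinExponent_le (βf := βf) hα hI hε0
  have hSB := liminfExpRate_le_steinExponent (βf := βf) hSα
  have hBI : steinExponent αf βf ε ≤ ⨅ ε' ∈ Set.Ioi ε, steinExponent αf βf ε' :=
    le_iInf₂ fun ε' hε' => steinExponent_mono (le_of_lt hε')
  exact ⟨le_antisymm hBI (hSβ.trans hSB), S, hSα, le_antisymm hSB (hBI.trans hSβ)⟩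

/-- Right continuity of the Stein exponent `B(ε)` and attainment of the supremum
in its definition, in the abstract hypothesis-testing setting. -/
theorem B_right_continuous_and_attained {Test : ℕ → Type*}
    (αf βf : ∀ n, Test n → ℝ)
    (hα : ∀ n T, αf n T ∈ Set.Icc (0 : ℝ) 1) (hβ : ∀ n T, 0 ≤ βf n T)
    (hI : ∀ n, ∃ T, αf n T = 0)
    (B : ℝ → EReal)
    (hB : ∀ ε, B ε = sSup {z : EReal | ∃ T : ∀ n, Test n,
        Filter.limsup (fun n => αf n (T n)) Filter.atTop ≤ ε ∧
        z = liminfExpRate (fun n => βf n (T n))})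
    (ε : ℝ) (hε0 : 0 ≤ ε) (hε1 : ε < 1) :
    (B ε = ⨅ ε' ∈ Set.Ioi ε, B ε') ∧
    ∃ T : ∀ n, Test n,
      Filter.limsup (fun n => αf n (T n)) Filter.atTop ≤ ε ∧
      liminfExpRate (fun n => βf n (T n)) = B ε :=
  B_right_continuous_and_attained_general αf βf hα hI B hB ε hε0
end
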